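/- Let f : (V → Bool) → Bool over a finite set V of Boolean variables be computed by a complete OBDD of width w with variable order π. Let X_1, …, X_q ⊆ V be pairwise disjoint sets of variables and Q_1, …, Q_q ∈ {∃, ∀}. Define g on assignments σ of V \ (X_1 ∪ … ∪ X_q) by g(σ) = true iff Q_1 ρ_1 ∈ [X_1] … Q_q ρ_q ∈ [X_q], f(σ ∪ ρ_1 ∪ … ∪ ρ_q) = true (where [X_j] denotes the set of assignments of X_j and ∃/∀ quantify over such assignments, with X_q innermost). Then g is computed by a complete OBDD of width at most tower(w, q) over the variables V \ (X_1 ∪ … ∪ X_q) whose variable order is the restriction of π, where tower(w, 0) = w and tower(w, j+1) = 2^{tower(w, j)}. -/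

import Mathlib

/-- A complete OBDD of width (at most) `w` over a set `V` of variables, with variable
order `ord` (listing the variables as the 1st, …, `n`th), modeled as a layered branching
program: state sets `S i` of cardinality at most `w`, a start state, transition
functions, and an accepting predicate on the last layer.  At layer `k` it reads the
value of the variable `ord k`. -/
structure OBDDv (V : Type*) (n w : ℕ) where
  ord : Fin n ≃ V
  S : Fin (n + 1) → Type
  finS : ∀ i, Fintype (S i)
  card_le : ∀ i, @Fintype.card (S i) (finS i) ≤ w
  start : S ⟨0, Nat.succ_pos n⟩
  trans : (k : ℕ) → (h : k < n) → S ⟨k, Nat.lt_succ_of_lt h⟩ → Bool →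
    S ⟨k + 1, Nat.succ_lt_succ h⟩
  accept : S ⟨n, Nat.lt_succ_self n⟩ → Bool

/-- The state reached after reading the first `k` variables of the order. -/
def OBDDv.stateAt {V : Type*} {n w : ℕ} (M : OBDDv V n w) (τ : V → Bool) :
    (k : ℕ) → (h : k ≤ n) → M.S ⟨k, Nat.lt_succ_of_le h⟩
  | 0, _ => M.start
  | k + 1, h =>
    M.trans k (Nat.lt_of_succ_le h) (M.stateAt τ k (Nat.le_of_succ_le h))
      (τ (M.ord ⟨k, Nat.lt_of_succ_le h⟩))

/-- The function computed by the OBDD. -/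
def OBDDv.eval {V : Type*} {n w : ℕ} (M : OBDDv V n w) (τ : V → Bool) : Bool :=
  M.accept (M.stateAt τ n (Nat.le_refl n))

/-- The tower function: `tower w 0 = w` and `tower w (j+1) = 2 ^ tower w j`. -/
def tower (w : ℕ) : ℕ → ℕ
  | 0 => w
  | j + 1 => 2 ^ tower w j

/-- `QEval q X Q f σ` is the truth value of
`Q_1 ρ_1 ∈ [X 1] … Q_q ρ_q ∈ [X q], f (σ ∪ ρ_1 ∪ … ∪ ρ_q)`, where `Q j = true` means `∃`
and `Q j = false` means `∀`, and quantification over assignments of `X j` is phrased as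
quantification over assignments of `V` agreeing with the current one outside `X j`. -/
def QEval {V : Type*} :
    (q : ℕ) → (Fin q → Set V) → (Fin q → Bool) → ((V → Bool) → Bool) → (V → Bool) → Prop
  | 0, _, _, f, σ => f σ = true
  | q + 1, X, Q, f, σ =>
    match Q 0 with
    | true => ∃ σ' : V → Bool, (∀ v, v ∉ X 0 → σ' v = σ v) ∧
        QEval q (fun j => X j.succ) (fun j => Q j.succ) f σ'
    | false => ∀ σ' : V → Bool, (∀ v, v ∉ X 0 → σ' v = σ v) →
        QEval q (fun j => X j.succ) (fun j => Q j.succ) f σ'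

section Helpers
variable {V W : Type*} {n w : ℕ}

theorem OBDDv.stateAt_succ (M : OBDDv V n w) (τ : V → Bool) (k : ℕ) (h : k + 1 ≤ n) :
    M.stateAt τ (k + 1) h =
      M.trans k (Nat.lt_of_succ_le h) (M.stateAt τ k (Nat.le_of_succ_le h))
        (τ (M.ord ⟨k, Nat.lt_of_succ_le h⟩)) := rfl

theorem OBDDv.eval_def (M : OBDDv V n w) (τ : V → Bool) (h : n ≤ n) :
    M.eval τ = M.accept (M.stateAt τ n h) := rfl

/-- If two assignments lead to the same state at layer `m` and agree on the variables
read at layers `m, …, m'-1`, they lead to the same state at layer `m'`. -/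
theorem OBDDv.stateAt_eq_of (M : OBDDv V n w) (ρ ρ' : V → Bool) (m : ℕ) (hm : m ≤ n)
    (hbase : M.stateAt ρ m hm = M.stateAt ρ' m hm) :
    ∀ (m' : ℕ) (hm' : m' ≤ n), m ≤ m' →
      (∀ (j : ℕ) (hj : j < n), m ≤ j → j < m' →
        ρ (M.ord ⟨j, hj⟩) = ρ' (M.ord ⟨j, hj⟩)) →
      M.stateAt ρ m' hm' = M.stateAt ρ' m' hm' := by
  intro m'
  induction m' with
  | zero => intro hm' _ _; rfl
  | succ m' ih =>
    intro hm' hmm hagree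
    rcases Nat.eq_or_lt_of_le hmm with h | h
    · subst h; exact hbase
    · have hmm' : m ≤ m' := Nat.lt_succ_iff.mp h
      rw [M.stateAt_succ ρ m' hm', M.stateAt_succ ρ' m' hm',
        ih (Nat.le_of_succ_le hm') hmm' (fun j hj h1 h2 => hagree j hj h1 (by omega)),
        hagree m' (Nat.lt_of_succ_le hm') hmm' (Nat.lt_succ_self m')]

def OBDDv.relabel (M : OBDDv V n w) (φ : V ≃ W) : OBDDv W n w where
  ord := M.ord.trans φ
  S := M.S
  finS := M.finS
  card_le := M.card_le
  start := M.start
  trans := M.trans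
  accept := M.accept

theorem OBDDv.relabel_stateAt (M : OBDDv V n w) (φ : V ≃ W) (σ : W → Bool) :
    ∀ (k : ℕ) (h : k ≤ n),
      (M.relabel φ).stateAt σ k h = M.stateAt (fun v => σ (φ v)) k h := by
  intro k
  induction k with
  | zero => intro h; rfl
  | succ k ih =>
    intro h
    rw [OBDDv.stateAt_succ, OBDDv.stateAt_succ, ih]
    rfl

theorem OBDDv.relabel_eval (M : OBDDv V n w) (φ : V ≃ W) (σ : W → Bool) :
    (M.relabel φ).eval σ = M.eval (fun v => σ (φ v)) := by
  unfold OBDDv.eval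
  rw [OBDDv.relabel_stateAt]
  rfl

end Helpers

section OneQuant

attribute [local instance] Classical.propDecidable

variable {V : Type*} {n w : ℕ}

/-- The positions (layers) of the non-quantified variables. -/
noncomputable def qA (M : OBDDv V n w) (X : Set V) : Finset (Fin n) :=
  Finset.univ.filter fun k => M.ord k ∉ X

/-- The monotone enumeration of those positions. -/
noncomputable def qe (M : OBDDv V n w) (X : Set V) :
    Fin (qA M X).card ≃o {x // x ∈ qA M X} :=
  (qA M X).orderIsoOfFin rfl

/-- The layer of `M` corresponding to layer `i` of the quantified OBDD. -/
noncomputable def qp (M : OBDDv V n w) (X : Set V) (i : ℕ) : ℕ :=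
  if h : i < (qA M X).card then ((qe M X ⟨i, h⟩).val.val) else n

lemma qp_le (M : OBDDv V n w) (X : Set V) (i : ℕ) : qp M X i ≤ n := by
  unfold qp; split
  · exact Nat.le_of_lt (Fin.is_lt _)
  · exact le_rfl

lemma qp_last (M : OBDDv V n w) (X : Set V) : qp M X (qA M X).card = n :=
  dif_neg (lt_irrefl _)

lemma mem_qA_iff (M : OBDDv V n w) (X : Set V) (k : Fin n) :
    k ∈ qA M X ↔ M.ord k ∉ X := by simp [qA]

lemma qe_not_mem (M : OBDDv V n w) (X : Set V) (i : Fin (qA M X).card) :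
    M.ord ((qe M X i).val) ∉ X :=
  (mem_qA_iff M X _).mp (qe M X i).2

lemma qe_le_iff (M : OBDDv V n w) (X : Set V) (i j : Fin (qA M X).card) :
    ((qe M X i).val.val ≤ (qe M X j).val.val) ↔ i ≤ j := by
  rw [show ((qe M X i).val.val ≤ (qe M X j).val.val) ↔ (qe M X i ≤ qe M X j) from
    Iff.symm (by rw [← Subtype.coe_le_coe, Fin.le_def])]
  exact (qe M X).le_iff_le

lemma qe_lt_iff (M : OBDDv V n w) (X : Set V) (i j : Fin (qA M X).card) :
    ((qe M X i).val.val < (qe M X j).val.val) ↔ i < j := by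
  rw [show ((qe M X i).val.val < (qe M X j).val.val) ↔ (qe M X i < qe M X j) from
    Iff.symm (by rw [← Subtype.coe_lt_coe, Fin.lt_def])]
  exact (qe M X).lt_iff_lt

lemma qA_exists (M : OBDDv V n w) (X : Set V) (k : Fin n) (hk : k ∈ qA M X) :
    ∃ j, qe M X j = ⟨k, hk⟩ :=
  ⟨(qe M X).symm ⟨k, hk⟩, (qe M X).apply_symm_apply _⟩

lemma qA_qp0_le (M : OBDDv V n w) (X : Set V) (k : Fin n) (hk : k ∈ qA M X) :
    qp M X 0 ≤ (k : ℕ) := by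
  obtain ⟨j, hj⟩ := qA_exists M X k hk
  have h0 : 0 < (qA M X).card := j.pos
  rw [qp, dif_pos h0]
  have := (qe_le_iff M X ⟨0, h0⟩ j).mpr (Fin.mk_le_mk.mpr (Nat.zero_le _) : (⟨0,h0⟩ : Fin _) ≤ j)
  calc (qe M X ⟨0, h0⟩).val.val ≤ (qe M X j).val.val := this
    _ = (k : ℕ) := by rw [hj]

lemma qp_step_le (M : OBDDv V n w) (X : Set V) (k : ℕ) (hk : k < (qA M X).card) :
    qp M X k ≤ qp M X (k + 1) := by
  unfold qp
  rw [dif_pos hk]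
  split
  · next h1 =>
    exact (qe_le_iff M X ⟨k, hk⟩ ⟨k+1, h1⟩).mpr (Fin.mk_le_mk.mpr (Nat.le_succ k))
  · exact Nat.le_of_lt (Fin.is_lt _)

lemma qA_between (M : OBDDv V n w) (X : Set V) (k : ℕ) (hk : k < (qA M X).card)
    (kk : Fin n) (hkk : kk ∈ qA M X) (h1 : qp M X k ≤ (kk : ℕ))
    (h2 : (kk : ℕ) < qp M X (k + 1)) : (kk : ℕ) = qp M X k := by
  obtain ⟨j, hj⟩ := qA_exists M X kk hkk
  have hval : (qe M X j).val.val = (kk : ℕ) := by rw [hj]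
  rw [qp, dif_pos hk] at h1 ⊢
  have hle : (⟨k, hk⟩ : Fin _) ≤ j := by
    rw [← qe_le_iff M X]; omega
  have hlt : (j : ℕ) < k + 1 := by
    by_cases hk1 : k + 1 < (qA M X).card
    · rw [qp, dif_pos hk1] at h2
      have : j < (⟨k+1, hk1⟩ : Fin _) := by rw [← qe_lt_iff M X]; omega
      exact this
    · have := j.isLt; omega
  have hjk : j = (⟨k, hk⟩ : Fin _) := by
    apply Fin.ext
    have := Fin.mk_le_mk.mp hle
    simp only [Fin.val_mk] at this ⊢
    omega
  rw [← hval, hjk]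

end OneQuant

section OneQuantM

attribute [local instance] Classical.propDecidable

variable {V : Type*} {n w : ℕ}

noncomputable def qStart (M : OBDDv V n w) (X : Set V) :
    (M.S ⟨qp M X 0, Nat.lt_succ_of_le (qp_le M X 0)⟩ → Bool) :=
  fun s => decide (∃ ρ : V → Bool, M.stateAt ρ (qp M X 0) (qp_le M X 0) = s)

noncomputable def qTrans (M : OBDDv V n w) (X : Set V) (k : ℕ) (h : k < (qA M X).card)
    (T : M.S ⟨qp M X k, Nat.lt_succ_of_le (qp_le M X k)⟩ → Bool) (b0 : Bool) :
    (M.S ⟨qp M X (k+1), Nat.lt_succ_of_le (qp_le M X (k+1))⟩ → Bool) :=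
  fun s' => decide (∃ ρ : V → Bool,
    ρ (M.ord ((qe M X ⟨k, h⟩).val)) = b0 ∧
    T (M.stateAt ρ (qp M X k) (qp_le M X k)) = true ∧
    M.stateAt ρ (qp M X (k+1)) (qp_le M X (k+1)) = s')

noncomputable def qAccept (M : OBDDv V n w) (X : Set V) (b : Bool)
    (T : M.S ⟨qp M X (qA M X).card, Nat.lt_succ_of_le (qp_le M X _)⟩ → Bool) : Bool :=
  if b then
    decide (∃ ρ : V → Bool,
      T (M.stateAt ρ (qp M X (qA M X).card) (qp_le M X _)) = true ∧ M.eval ρ = true)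
  else
    decide (∀ ρ : V → Bool,
      T (M.stateAt ρ (qp M X (qA M X).card) (qp_le M X _)) = true → M.eval ρ = true)

noncomputable def qMachine (M : OBDDv V n w) (X : Set V) (b : Bool) :
    OBDDv {v : V // v ∉ X} (qA M X).card (2 ^ w) where
  ord := (qe M X).toEquiv.trans (Equiv.subtypeEquiv M.ord (fun k => (mem_qA_iff M X k)))
  S := fun i => M.S ⟨qp M X i.val, Nat.lt_succ_of_le (qp_le M X i.val)⟩ → Bool
  finS := fun i => by
    letI := M.finS
    letI : DecidableEq (M.S ⟨qp M X i.val, Nat.lt_succ_of_le (qp_le M X i.val)⟩) :=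
      Classical.decEq _
    exact inferInstance
  card_le := fun i => by
    letI := M.finS
    letI : DecidableEq (M.S ⟨qp M X i.val, Nat.lt_succ_of_le (qp_le M X i.val)⟩) :=
      Classical.decEq _
    have h : Fintype.card
        (M.S ⟨qp M X i.val, Nat.lt_succ_of_le (qp_le M X i.val)⟩ → Bool) ≤ 2 ^ w := by
      rw [Fintype.card_fun, Fintype.card_bool]
      exact Nat.pow_le_pow_right (by norm_num) (M.card_le _)
    convert h using 2
  start := qStart M X
  trans := fun k h T b0 => qTrans M X k h T b0
  accept := fun T => qAccept M X b T

lemma qMachine_ord_val (M : OBDDv V n w) (X : Set V) (b : Bool) (i : Fin (qA M X).card) :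
    (((qMachine M X b).ord i) : V) = M.ord ((qe M X i).val) := rfl

lemma qMachine_trans_eq (M : OBDDv V n w) (X : Set V) (b : Bool) (k : ℕ)
    (h : k < (qA M X).card)
    (T : M.S ⟨qp M X k, Nat.lt_succ_of_le (qp_le M X k)⟩ → Bool) (b0 : Bool) :
    (qMachine M X b).trans k h T b0 = qTrans M X k h T b0 := rfl

lemma qMachine_accept_eq (M : OBDDv V n w) (X : Set V) (b : Bool)
    (T : M.S ⟨qp M X (qA M X).card, Nat.lt_succ_of_le (qp_le M X _)⟩ → Bool) :
    (qMachine M X b).accept T = qAccept M X b T := rfl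

lemma qMachine_mono (M : OBDDv V n w) (X : Set V) (b : Bool) :
    StrictMono (fun i : Fin (qA M X).card => M.ord.symm (((qMachine M X b).ord i)).val) := by
  intro i j hij
  show M.ord.symm (M.ord ((qe M X i).val)) < M.ord.symm (M.ord ((qe M X j).val))
  rw [Equiv.symm_apply_apply, Equiv.symm_apply_apply]
  rw [Fin.lt_def]
  exact (qe_lt_iff M X i j).mpr hij

end OneQuantM

section OneQuantInv

attribute [local instance] Classical.propDecidable

variable {V : Type*} {n w : ℕ}

theorem qMachine_stateAt (M : OBDDv V n w) (X : Set V) (b : Bool) (τ : V → Bool) :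
    ∀ (k : ℕ) (hk : k ≤ (qA M X).card),
      (qMachine M X b).stateAt (fun v => τ v.val) k hk =
        fun s => decide (∃ ρ : V → Bool, (∀ v, v ∉ X → ρ v = τ v) ∧
          M.stateAt ρ (qp M X k) (qp_le M X k) = s) := by
  have hbase0 : ∀ (f g : V → Bool),
      M.stateAt f 0 (Nat.zero_le n) = M.stateAt g 0 (Nat.zero_le n) := fun _ _ => rfl
  intro k
  induction k with
  | zero =>
    intro hk
    show qStart M X = _
    unfold qStart
    funext s
    rw [decide_eq_decide]
    constructor
    · rintro ⟨ρ, hst⟩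
      refine ⟨(fun v => if ((M.ord.symm v : Fin n) : ℕ) < qp M X 0 then ρ v else τ v),
        ?_, ?_⟩
      · intro v hv
        show (if ((M.ord.symm v : Fin n) : ℕ) < qp M X 0 then ρ v else τ v) = τ v
        rw [if_neg]
        intro hlt
        have hmem : M.ord.symm v ∈ qA M X := by
          rw [mem_qA_iff, Equiv.apply_symm_apply]; exact hv
        have := qA_qp0_le M X _ hmem
        omega
      · refine (M.stateAt_eq_of
          (fun v => if ((M.ord.symm v : Fin n) : ℕ) < qp M X 0 then ρ v else τ v)
          ρ 0 (Nat.zero_le n) (hbase0 _ _) (qp M X 0) (qp_le M X 0)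
          (Nat.zero_le _) ?_).trans hst
        intro j hj _ h2
        simp only [Equiv.symm_apply_apply]
        rw [if_pos h2]
    · rintro ⟨ρ, _, hst⟩
      exact ⟨ρ, hst⟩
  | succ k ih =>
    intro hk
    have hklt : k < (qA M X).card := Nat.lt_of_succ_le hk
    rw [OBDDv.stateAt_succ, ih (Nat.le_of_succ_le hk), qMachine_trans_eq]
    have hb0 : τ ((qMachine M X b).ord ⟨k, Nat.lt_of_succ_le hk⟩).val
        = τ (M.ord ((qe M X ⟨k, Nat.lt_of_succ_le hk⟩).val)) := rfl
    have hqnm : M.ord ((qe M X ⟨k, Nat.lt_of_succ_le hk⟩).val) ∉ X :=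
      qe_not_mem M X _
    unfold qTrans
    funext s'
    rw [decide_eq_decide]
    constructor
    · rintro ⟨ρ, hbit, hT, hst⟩
      rw [decide_eq_true_eq] at hT
      obtain ⟨ρ₁, hag₁, h₁⟩ := hT
      refine ⟨(fun v => if ((M.ord.symm v : Fin n) : ℕ) < qp M X k then ρ₁ v
        else if ((M.ord.symm v : Fin n) : ℕ) < qp M X (k+1) then ρ v else τ v), ?_, ?_⟩
      · intro v hv
        have hmem : M.ord.symm v ∈ qA M X := by
          rw [mem_qA_iff, Equiv.apply_symm_apply]; exact hv
        show (if ((M.ord.symm v : Fin n) : ℕ) < qp M X k then ρ₁ v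
          else if ((M.ord.symm v : Fin n) : ℕ) < qp M X (k+1) then ρ v else τ v) = τ v
        by_cases h1 : ((M.ord.symm v : Fin n) : ℕ) < qp M X k
        · rw [if_pos h1]; exact hag₁ v hv
        · by_cases h2 : ((M.ord.symm v : Fin n) : ℕ) < qp M X (k+1)
          · rw [if_neg h1, if_pos h2]
            have heq : ((M.ord.symm v : Fin n) : ℕ) = qp M X k :=
              qA_between M X k hklt _ hmem (le_of_not_gt h1) h2
            have hv' : v = M.ord ((qe M X ⟨k, Nat.lt_of_succ_le hk⟩).val) := by
              have hfe : (M.ord.symm v : Fin n)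
                  = (qe M X ⟨k, Nat.lt_of_succ_le hk⟩).val := by
                apply Fin.ext
                rw [heq, qp, dif_pos hklt]
              rw [← hfe, Equiv.apply_symm_apply]
            subst hv'
            rw [hbit]
            exact hb0
          · rw [if_neg h1, if_neg h2]
      · have e1 : M.stateAt (fun v => if ((M.ord.symm v : Fin n) : ℕ) < qp M X k then ρ₁ v
            else if ((M.ord.symm v : Fin n) : ℕ) < qp M X (k+1) then ρ v else τ v)
            (qp M X k) (qp_le M X k) = M.stateAt ρ₁ (qp M X k) (qp_le M X k) := by
          refine M.stateAt_eq_of _ ρ₁ 0 (Nat.zero_le n) (hbase0 _ _) _ _ (Nat.zero_le _) ?_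
          intro j hj _ h2
          simp only [Equiv.symm_apply_apply]
          rw [if_pos h2]
        refine (M.stateAt_eq_of _ ρ (qp M X k) (qp_le M X k) (e1.trans h₁)
          (qp M X (k+1)) (qp_le M X (k+1)) (qp_step_le M X k hklt) ?_).trans hst
        intro j hj h1 h2
        simp only [Equiv.symm_apply_apply]
        rw [if_neg (by omega), if_pos h2]
    · rintro ⟨ρ₂, hag, hst⟩
      refine ⟨ρ₂, ?_, ?_, hst⟩
      · show ρ₂ (M.ord ((qe M X ⟨k, Nat.lt_of_succ_le hk⟩).val))
          = τ ((qMachine M X b).ord ⟨k, Nat.lt_of_succ_le hk⟩).val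
        rw [hb0]
        exact hag _ hqnm
      · rw [decide_eq_true_eq]
        exact ⟨ρ₂, hag, rfl⟩

theorem qMachine_eval (M : OBDDv V n w) (X : Set V) (b : Bool) (τ : V → Bool) :
    ((qMachine M X b).eval (fun v => τ v.val) = true) ↔
      cond b (∃ ρ : V → Bool, (∀ v, v ∉ X → ρ v = τ v) ∧ M.eval ρ = true)
             (∀ ρ : V → Bool, (∀ v, v ∉ X → ρ v = τ v) → M.eval ρ = true) := by
  have hinv := qMachine_stateAt M X b τ (qA M X).card (Nat.le_refl _)
  show qAccept M X b ((qMachine M X b).stateAt _ (qA M X).card (Nat.le_refl _)) = true ↔ _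
  rw [hinv]
  unfold qAccept
  have hN : qp M X (qA M X).card = n := qp_last M X
  cases b
  · rw [if_neg Bool.false_ne_true, decide_eq_true_eq, Bool.cond_false]
    constructor
    · intro h ρ' hag
      refine h ρ' ?_
      simp only [decide_eq_true_eq]
      exact ⟨ρ', hag, rfl⟩
    · intro h ρ hT
      simp only [decide_eq_true_eq] at hT
      obtain ⟨ρ', hag, hst⟩ := hT
      have heq := M.stateAt_eq_of ρ' ρ (qp M X (qA M X).card) (qp_le M X _) hst
        n (Nat.le_refl n) (by omega) (fun j hj h1 h2 => by omega)
      have := h ρ' hag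
      rw [M.eval_def ρ' (Nat.le_refl n), heq] at this
      rw [M.eval_def ρ (Nat.le_refl n)]
      exact this
  · rw [if_pos rfl, decide_eq_true_eq, Bool.cond_true]
    constructor
    · rintro ⟨ρ, hT, hev⟩
      simp only [decide_eq_true_eq] at hT
      obtain ⟨ρ', hag, hst⟩ := hT
      refine ⟨ρ', hag, ?_⟩
      have heq := M.stateAt_eq_of ρ' ρ (qp M X (qA M X).card) (qp_le M X _) hst
        n (Nat.le_refl n) (by omega) (fun j hj h1 h2 => by omega)
      rw [M.eval_def ρ' (Nat.le_refl n), heq]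
      rw [M.eval_def ρ (Nat.le_refl n)] at hev
      exact hev
    · rintro ⟨ρ', hag, hev⟩
      refine ⟨ρ', ?_, hev⟩
      simp only [decide_eq_true_eq]
      exact ⟨ρ', hag, rfl⟩

end OneQuantInv

section MainAux

lemma QEval_succ_true {V : Type*} {q : ℕ} (X : Fin (q+1) → Set V) (Q : Fin (q+1) → Bool)
    (f : (V → Bool) → Bool) (σ : V → Bool) (hQ : Q 0 = true) :
    QEval (q+1) X Q f σ ↔ ∃ σ' : V → Bool, (∀ v, v ∉ X 0 → σ' v = σ v) ∧
      QEval q (fun j => X j.succ) (fun j => Q j.succ) f σ' := by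
  simp only [QEval, hQ]

lemma QEval_succ_false {V : Type*} {q : ℕ} (X : Fin (q+1) → Set V) (Q : Fin (q+1) → Bool)
    (f : (V → Bool) → Bool) (σ : V → Bool) (hQ : Q 0 = false) :
    QEval (q+1) X Q f σ ↔ ∀ σ' : V → Bool, (∀ v, v ∉ X 0 → σ' v = σ v) →
      QEval q (fun j => X j.succ) (fun j => Q j.succ) f σ' := by
  simp only [QEval, hQ]

theorem obdd_qe_aux (q : ℕ) {V : Type*} (n w : ℕ) (M : OBDDv V n w)
    (X : Fin q → Set V) (Q : Fin q → Bool) :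
    ∃ (n' : ℕ) (M' : OBDDv {v : V // ∀ j, v ∉ X j} n' (tower w q)),
      StrictMono (fun i : Fin n' => M.ord.symm (M'.ord i).val) ∧
      ∀ τ : V → Bool,
        (M'.eval (fun v => τ v.val) = true ↔ QEval q X Q (fun ρ => M.eval ρ) τ) := by
  induction q with
  | zero =>
    refine ⟨n, M.relabel (Equiv.subtypeUnivEquiv (p := fun v => ∀ j : Fin 0, v ∉ X j) (fun v j => j.elim0)).symm,
      ?_, ?_⟩
    · have hfe : (fun i : Fin n =>
          M.ord.symm ((M.relabel
            (Equiv.subtypeUnivEquiv (p := fun v => ∀ j : Fin 0, v ∉ X j) (fun v j => j.elim0)).symm).ord i).val)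
          = fun i => i := by
        funext i
        show M.ord.symm (M.ord i) = i
        rw [Equiv.symm_apply_apply]
      rw [hfe]
      exact strictMono_id
    · intro τ
      erw [OBDDv.relabel_eval]
      show M.eval τ = true ↔ QEval 0 X Q (fun ρ => M.eval ρ) τ
      exact Iff.rfl
  | succ q ih =>
    obtain ⟨n₁, M₁, hmono₁, heval₁⟩ := ih (fun j => X j.succ) (fun j => Q j.succ)
    set X₀ : Set {v : V // ∀ j : Fin q, v ∉ X j.succ} := {u | u.val ∈ X 0} with hX₀
    let E : {u : {v : V // ∀ j : Fin q, v ∉ X j.succ} // u ∉ X₀}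
        ≃ {v : V // ∀ j : Fin (q+1), v ∉ X j} :=
      { toFun := fun u => ⟨u.val.val, fun j => Fin.cases u.2 (fun i => u.val.2 i) j⟩
        invFun := fun v => ⟨⟨v.val, fun j => v.2 j.succ⟩, v.2 0⟩
        left_inv := fun u => rfl
        right_inv := fun v => rfl }
    refine ⟨(qA M₁ X₀).card, (qMachine M₁ X₀ (Q 0)).relabel E, ?_, ?_⟩
    · intro i j hij
      have h2 := qMachine_mono M₁ X₀ (Q 0) hij
      have key : ∀ i : Fin (qA M₁ X₀).card,
          M.ord.symm (((qMachine M₁ X₀ (Q 0)).relabel E).ord i).val =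
            M.ord.symm ((M₁.ord (M₁.ord.symm ((qMachine M₁ X₀ (Q 0)).ord i).val)).val) := by
        intro i
        rw [Equiv.apply_symm_apply]
        rfl
      show M.ord.symm (((qMachine M₁ X₀ (Q 0)).relabel E).ord i).val <
        M.ord.symm (((qMachine M₁ X₀ (Q 0)).relabel E).ord j).val
      rw [key i, key j]
      exact hmono₁ h2
    · intro τ
      erw [OBDDv.relabel_eval]
      have h2 := qMachine_eval M₁ X₀ (Q 0) (fun u => τ u.val)
      refine h2.trans ?_
      cases hQ : Q 0
      · rw [Bool.cond_false, QEval_succ_false X Q _ τ hQ]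
        constructor
        · intro h σ' hag
          rw [← heval₁ σ']
          exact h (fun u => σ' u.val) (fun u hu => hag u.val hu)
        · intro h ρ₁ hag
          classical
          set σ' : V → Bool :=
            fun v => if h : ∀ j : Fin q, v ∉ X j.succ then ρ₁ ⟨v, h⟩ else τ v with hσ'
          have hfun : (fun u : {v : V // ∀ j : Fin q, v ∉ X j.succ} => σ' u.val) = ρ₁ := by
            funext u
            show (if h : ∀ j : Fin q, u.val ∉ X j.succ then ρ₁ ⟨u.val, h⟩ else τ u.val) = ρ₁ u
            rw [dif_pos u.2]
          have hag' : ∀ v, v ∉ X 0 → σ' v = τ v := by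
            intro v hv
            show (if h : ∀ j : Fin q, v ∉ X j.succ then ρ₁ ⟨v, h⟩ else τ v) = τ v
            by_cases h : ∀ j : Fin q, v ∉ X j.succ
            · rw [dif_pos h]
              exact hag ⟨v, h⟩ hv
            · rw [dif_neg h]
          have := h σ' hag'
          rw [← heval₁ σ', hfun] at this
          exact this
      · rw [Bool.cond_true, QEval_succ_true X Q _ τ hQ]
        constructor
        · rintro ⟨ρ₁, hag, hev⟩
          classical
          set σ' : V → Bool :=
            fun v => if h : ∀ j : Fin q, v ∉ X j.succ then ρ₁ ⟨v, h⟩ else τ v with hσ'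
          have hfun : (fun u : {v : V // ∀ j : Fin q, v ∉ X j.succ} => σ' u.val) = ρ₁ := by
            funext u
            show (if h : ∀ j : Fin q, u.val ∉ X j.succ then ρ₁ ⟨u.val, h⟩ else τ u.val) = ρ₁ u
            rw [dif_pos u.2]
          refine ⟨σ', ?_, ?_⟩
          · intro v hv
            show (if h : ∀ j : Fin q, v ∉ X j.succ then ρ₁ ⟨v, h⟩ else τ v) = τ v
            by_cases h : ∀ j : Fin q, v ∉ X j.succ
            · rw [dif_pos h]
              exact hag ⟨v, h⟩ hv
            · rw [dif_neg h]
          · rw [← heval₁ σ', hfun]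
            exact hev
        · rintro ⟨σ', hag, hq⟩
          exact ⟨fun u => σ' u.val, fun u hu => hag u.val hu, (heval₁ σ').mpr hq⟩

end MainAux


/-- If `f` is computed by a complete OBDD of width `w` with variable order `π` over
variables `V`, and `X 1, …, X q ⊆ V` are pairwise disjoint sets of variables with
quantifiers `Q 1, …, Q q`, then the quantified function
`g(σ) = Q_1 ρ_1 ∈ [X 1] … Q_q ρ_q ∈ [X q], f (σ ∪ ρ_1 ∪ … ∪ ρ_q)` is computed by a
complete OBDD of width at most `tower w q` over the variables `V \ (X 1 ∪ … ∪ X q)`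
whose variable order is the restriction of `π`. -/
theorem obdd_quantifier_elimination (V : Type*) [Fintype V] (n w q : ℕ)
    (M : OBDDv V n w) (X : Fin q → Set V)
    (hdisj : ∀ i j, i ≠ j → Disjoint (X i) (X j)) (Q : Fin q → Bool) :
    ∃ (n' : ℕ) (M' : OBDDv {v : V // ∀ j, v ∉ X j} n' (tower w q)),
      StrictMono (fun i : Fin n' => M.ord.symm (M'.ord i).val) ∧
      ∀ τ : V → Bool,
        (M'.eval (fun v => τ v.val) = true ↔ QEval q X Q (fun ρ => M.eval ρ) τ) := by
  exact obdd_qe_aux q n w M X Q
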